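/- arXiv:2010.07201 — 6 statements merged into one kernel-verified Lean document; each statement's English description precedes it below -/
import Mathlib

section
/- Let R be a reaction network on n species and let R̂ = R ∪ {(y, y′)} where (y, y′) ∉ R is a single additional reaction (y, y′ ∈ ℕⁿ, y ≠ y′). Then δ(R̂) ≥ δ(R): adding a reaction to a reaction network cannot decrease its deficiency. -/
/-!
Write `R'` for `R` with the reaction `(y, y')` added and `k` for the number of complexes among
`y, y'` that are new. The stoichiometric dimension grows by at most one, and only if `y' - y` is
not in `S(R)`; this forces `y ≠ y'` and rules out `y, y'` lying in one linkage class of `R`, since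
along a path of the link graph the reaction vectors sum to the difference of the endpoints.
Every linkage class of `R'` is the image of one of `R` or contains `y`, whence
`ℓ(R') ≤ ℓ(R) + k`, improved to `ℓ(R') ≤ ℓ(R) + k - 1` when `y ≠ y'` are not already linked in `R`.
-/

open Finset

noncomputable section

namespace ReactionNetwork

/-- A (candidate) reaction network on `n` species: a finite set of ordered pairs
`(y, y')` of complexes `y, y' ∈ ℕⁿ`. -/
abbrev Rxn (n : ℕ) := Finset ((Fin n → ℕ) × (Fin n → ℕ))

/-- The set of complexes of a reaction network. -/
def complexes {n : ℕ} (R : Rxn n) : Finset (Fin n → ℕ) :=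
  R.image Prod.fst ∪ R.image Prod.snd

/-- The undirected graph on the complexes of `R`, with an edge `{y, y'}` for each
reaction `(y, y') ∈ R`. -/
def linkGraph {n : ℕ} (R : Rxn n) : SimpleGraph {y // y ∈ complexes R} where
  Adj a b := a ≠ b ∧ (((a : Fin n → ℕ), (b : Fin n → ℕ)) ∈ R ∨
    ((b : Fin n → ℕ), (a : Fin n → ℕ)) ∈ R)
  symm := ⟨fun a b h => ⟨h.1.symm, h.2.symm⟩⟩
  loopless := ⟨fun a h => h.1 rfl⟩

/-- The number of linkage classes of `R`: the number of connected components of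
the undirected graph on the complexes. -/
def numLC {n : ℕ} (R : Rxn n) : ℕ :=
  Nat.card (linkGraph R).ConnectedComponent

/-- The dimension of the stoichiometric subspace of `R`. -/
def stoichDim {n : ℕ} (R : Rxn n) : ℕ :=
  Module.finrank ℝ (Submodule.span ℝ
    {d : Fin n → ℝ | ∃ r ∈ R, d = fun i => ((r.2 i : ℝ) - (r.1 i : ℝ))})

/-- The deficiency of a reaction network: `|C(R)| - ℓ(R) - s(R)`. -/
def deficiency {n : ℕ} (R : Rxn n) : ℤ :=
  (complexes R).card - numLC R - stoichDim R

open SimpleGraph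

section

variable {n : ℕ}

def reactionVector (y y' : Fin n → ℕ) : Fin n → ℝ :=
  fun i => (y' i : ℝ) - (y i : ℝ)

@[simp]
lemma reactionVector_self (y : Fin n → ℕ) : reactionVector y y = 0 := by
  ext i; simp [reactionVector]

lemma reactionVector_swap (y y' : Fin n → ℕ) :
    reactionVector y' y = -reactionVector y y' := by
  ext i; simp [reactionVector]

lemma reactionVector_add (y y' y'' : Fin n → ℕ) :
    reactionVector y y' + reactionVector y' y'' = reactionVector y y'' := by
  ext i; simp only [reactionVector, Pi.add_apply]; ring

def stoichSpace (R : Rxn n) : Submodule ℝ (Fin n → ℝ) :=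
  Submodule.span ℝ {d | ∃ r ∈ R, d = reactionVector r.1 r.2}

lemma stoichDim_eq_finrank (R : Rxn n) : stoichDim R = Module.finrank ℝ (stoichSpace R) :=
  rfl

lemma reactionVector_mem_stoichSpace {R : Rxn n} {r : (Fin n → ℕ) × (Fin n → ℕ)}
    (hr : r ∈ R) : reactionVector r.1 r.2 ∈ stoichSpace R :=
  Submodule.subset_span ⟨r, hr, rfl⟩

lemma stoichSpace_insert (R : Rxn n) (y y' : Fin n → ℕ) :
    stoichSpace (insert (y, y') R) = (ℝ ∙ reactionVector y y') ⊔ stoichSpace R := by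
  rw [stoichSpace, stoichSpace, ← Submodule.span_insert]
  congr 1
  ext d
  simp [or_and_right, exists_or]

lemma stoichDim_insert_le (R : Rxn n) (y y' : Fin n → ℕ) :
    stoichDim (insert (y, y') R) ≤ stoichDim R + 1 := by
  rw [stoichDim_eq_finrank, stoichDim_eq_finrank, stoichSpace_insert, add_comm]
  refine (Submodule.finrank_add_le_finrank_add_finrank _ _).trans (Nat.add_le_add_right ?_ _)
  simpa using finrank_span_le_card ({reactionVector y y'} : Set (Fin n → ℝ))

lemma stoichDim_insert_of_mem {R : Rxn n} {y y' : Fin n → ℕ}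
    (h : reactionVector y y' ∈ stoichSpace R) :
    stoichDim (insert (y, y') R) = stoichDim R := by
  rw [stoichDim_eq_finrank, stoichDim_eq_finrank, stoichSpace_insert,
    sup_eq_right.mpr ((Submodule.span_singleton_le_iff_mem _ _).mpr h)]

lemma reactionVector_mem_stoichSpace_of_reachable {R : Rxn n} {a b : {x // x ∈ complexes R}}
    (h : (linkGraph R).Reachable a b) : reactionVector a b ∈ stoichSpace R := by
  obtain ⟨w⟩ := h
  induction w with
  | nil => simp
  | @cons u v _ huv _ ih =>
    rw [← reactionVector_add _ (v : Fin n → ℕ)]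
    refine add_mem ?_ ih
    rcases huv.2 with huv | hvu
    · exact reactionVector_mem_stoichSpace huv
    · rw [reactionVector_swap]
      exact neg_mem (reactionVector_mem_stoichSpace hvu)

lemma complexes_insert (R : Rxn n) (y y' : Fin n → ℕ) :
    complexes (insert (y, y') R) = insert y (insert y' (complexes R)) := by
  ext x
  simp only [complexes, mem_union, mem_image, mem_insert, exists_eq_or_imp, eq_comm (a := x)]
  grind

lemma complexes_subset_complexes_insert (R : Rxn n) (y y' : Fin n → ℕ) :
    complexes R ⊆ complexes (insert (y, y') R) := by
  rw [complexes_insert]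
  exact (subset_insert _ _).trans (subset_insert _ _)

lemma left_mem_complexes_insert (R : Rxn n) (y y' : Fin n → ℕ) :
    y ∈ complexes (insert (y, y') R) := by
  simp [complexes_insert]

lemma right_mem_complexes_insert (R : Rxn n) (y y' : Fin n → ℕ) :
    y' ∈ complexes (insert (y, y') R) := by
  simp [complexes_insert]

def insertHom (R : Rxn n) (y y' : Fin n → ℕ) :
    linkGraph R →g linkGraph (insert (y, y') R) where
  toFun a := ⟨a, complexes_subset_complexes_insert R y y' a.2⟩
  map_rel' h := ⟨fun e => h.1 (Subtype.ext (congrArg Subtype.val e :)),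
    h.2.imp (mem_insert_of_mem) (mem_insert_of_mem)⟩

section LinkageClasses

variable (R : Rxn n) (y y' : Fin n → ℕ)

lemma connectedComponentMk_insert_left_eq_right :
    (linkGraph (insert (y, y') R)).connectedComponentMk ⟨y, left_mem_complexes_insert R y y'⟩ =
      (linkGraph (insert (y, y') R)).connectedComponentMk
        ⟨y', right_mem_complexes_insert R y y'⟩ := by
  by_cases hyy' : y = y'
  · subst hyy'; rfl
  · refine ConnectedComponent.eq.mpr (Adj.reachable ⟨?_, Or.inl (mem_insert_self _ _)⟩)
    exact fun e => hyy' (congrArg Subtype.val e)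

lemma map_insertHom_mk {x : Fin n → ℕ} (hx : x ∈ complexes R) :
    ((linkGraph R).connectedComponentMk ⟨x, hx⟩).map (insertHom R y y') =
      (linkGraph (insert (y, y') R)).connectedComponentMk
        ⟨x, complexes_subset_complexes_insert R y y' hx⟩ :=
  rfl

lemma mem_range_map_insertHom_or_eq (c : (linkGraph (insert (y, y') R)).ConnectedComponent) :
    c ∈ Set.range (ConnectedComponent.map (insertHom R y y')) ∨
      c = (linkGraph (insert (y, y') R)).connectedComponentMk
        ⟨y, left_mem_complexes_insert R y y'⟩ := by
  induction c using ConnectedComponent.ind with | h v => ?_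
  obtain ⟨x, hx⟩ := v
  rw [complexes_insert, mem_insert, mem_insert] at hx
  rcases hx with rfl | rfl | hx
  · exact Or.inr rfl
  · exact Or.inr (connectedComponentMk_insert_left_eq_right R y x).symm
  · exact Or.inl ⟨_, map_insertHom_mk R y y' hx⟩

lemma surjective_map_insertHom (h : y ∈ complexes R ∨ y' ∈ complexes R) :
    Function.Surjective (ConnectedComponent.map (insertHom R y y')) := by
  intro c
  rcases mem_range_map_insertHom_or_eq R y y' c with hc | rfl
  · exact hc
  rcases h with hy | hy'
  · exact ⟨_, map_insertHom_mk R y y' hy⟩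
  · exact ⟨_, (map_insertHom_mk R y y' hy').trans
      (connectedComponentMk_insert_left_eq_right R y y').symm⟩

lemma numLC_insert_le_of_mem (h : y ∈ complexes R ∨ y' ∈ complexes R) :
    numLC (insert (y, y') R) ≤ numLC R :=
  Nat.card_le_card_of_surjective _ (surjective_map_insertHom R y y' h)

lemma numLC_insert_le_succ : numLC (insert (y, y') R) ≤ numLC R + 1 := by
  have hsurj : Function.Surjective fun o => Option.elim o
      ((linkGraph (insert (y, y') R)).connectedComponentMk ⟨y, left_mem_complexes_insert R y y'⟩)
      (ConnectedComponent.map (insertHom R y y')) := by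
    intro c
    rcases mem_range_map_insertHom_or_eq R y y' c with ⟨d, rfl⟩ | rfl
    · exact ⟨some d, rfl⟩
    · exact ⟨none, rfl⟩
  simpa [numLC, Finite.card_option] using Nat.card_le_card_of_surjective _ hsurj

lemma numLC_insert_lt {hy : y ∈ complexes R} {hy' : y' ∈ complexes R}
    (h : ¬ (linkGraph R).Reachable ⟨y, hy⟩ ⟨y', hy'⟩) :
    numLC (insert (y, y') R) < numLC R := by
  have hsurj := surjective_map_insertHom R y y' (Or.inl hy)
  refine (Nat.card_le_card_of_surjective _ hsurj).lt_of_ne fun hcard => h ?_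
  have hinj := (hsurj.bijective_of_nat_card_le hcard.ge).1
  refine ConnectedComponent.eq.mp (hinj ?_)
  rw [map_insertHom_mk, map_insertHom_mk]
  exact connectedComponentMk_insert_left_eq_right R y y'

lemma numLC_insert_add_card_le :
    numLC (insert (y, y') R) + #(complexes R) ≤ numLC R + #(complexes (insert (y, y') R)) := by
  rw [complexes_insert]
  have hsub := card_le_card (subset_insert y (insert y' (complexes R)))
  by_cases h : y ∈ complexes R ∨ y' ∈ complexes R
  · have := numLC_insert_le_of_mem R y y' h
    have := card_le_card (subset_insert y' (complexes R))
    omega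
  · have := numLC_insert_le_succ R y y'
    have := card_insert_of_notMem (not_or.mp h).2
    omega

lemma numLC_insert_add_card_lt (hyy' : y ≠ y')
    (hlink : ∀ (hy : y ∈ complexes R) (hy' : y' ∈ complexes R),
      ¬ (linkGraph R).Reachable ⟨y, hy⟩ ⟨y', hy'⟩) :
    numLC (insert (y, y') R) + #(complexes R) < numLC R + #(complexes (insert (y, y') R)) := by
  rw [complexes_insert]
  by_cases hy : y ∈ complexes R <;> by_cases hy' : y' ∈ complexes R
  · have := numLC_insert_lt R y y' (hlink hy hy')
    rw [insert_eq_of_mem hy', insert_eq_of_mem hy]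
    omega
  · have := numLC_insert_le_of_mem R y y' (Or.inl hy)
    rw [insert_eq_of_mem (mem_insert_of_mem hy), card_insert_of_notMem hy']
    omega
  · have := numLC_insert_le_of_mem R y y' (Or.inr hy')
    rw [insert_eq_of_mem hy', card_insert_of_notMem hy]
    omega
  · have := numLC_insert_le_succ R y y'
    rw [card_insert_of_notMem (by simp [hy, hyy']), card_insert_of_notMem hy']
    omega

end LinkageClasses

end

theorem deficiency_le_deficiency_insert_general (n : ℕ) (R : Rxn n) (y y' : Fin n → ℕ) :
    deficiency R ≤ deficiency (insert (y, y') R) := by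
  unfold deficiency
  by_cases hv : reactionVector y y' ∈ stoichSpace R
  · have := stoichDim_insert_of_mem hv
    have := numLC_insert_add_card_le R y y'
    omega
  · have hyy' : y ≠ y' := by
      rintro rfl
      exact hv (by simp)
    have hlink : ∀ (hy : y ∈ complexes R) (hy' : y' ∈ complexes R),
        ¬ (linkGraph R).Reachable ⟨y, hy⟩ ⟨y', hy'⟩ :=
      fun _ _ h => hv (reactionVector_mem_stoichSpace_of_reachable h)
    have := stoichDim_insert_le R y y'
    have := numLC_insert_add_card_lt R y y' hyy' hlink
    omega

/-- Adding a single reaction to a reaction network cannot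
decrease its deficiency. -/
theorem deficiency_le_deficiency_insert (n : ℕ) (R : Rxn n)
    (hR : ∀ r ∈ R, r.1 ≠ r.2) (y y' : Fin n → ℕ) (hyy' : y ≠ y')
    (hnew : (y, y') ∉ R) :
    deficiency R ≤ deficiency (insert (y, y') R) :=
  deficiency_le_deficiency_insert_general n R y y'

end ReactionNetwork
end
end

section
/- Let R be a reaction network on n species and let R̃ ⊆ R be any subset of its reactions. Then δ(R̃) ≤ δ(R). In particular, if δ(R̃) > 0 then δ(R) > 0. -/
/-!
Work in the space `ℝ^(ℕⁿ)` of formal combinations of complexes and let `D(R)` be the span of the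
edge vectors `e_{y'} - e_y` of the reactions. Pushing forward along the map sending a complex to
its linkage class is surjective, and its kernel is the incidence span because any two complexes of
one linkage class are joined by a walk; hence `dim D(R) = |C(R)| - ℓ(R)`. The map
`Y = complexMap : e_y ↦ y` carries `D(R)` onto `S(R)`, so rank–nullity gives
`δ(R) = dim (D(R) ∩ ker Y)`, which is monotone in `R`.
-/

open Finset

noncomputable section

open Module Finsupp

namespace SimpleGraph

variable (K : Type*) [Field K] {V : Type*} (G : SimpleGraph V)

def incidenceSpan : Submodule K (V →₀ K) :=
  Submodule.span K (Set.range fun d : G.Dart => single d.snd 1 - single d.fst 1)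

variable {K G}

theorem connectedComponentMk_surjective : Function.Surjective G.connectedComponentMk :=
  fun c => c.ind fun v => ⟨v, rfl⟩

theorem single_sub_single_mem_incidenceSpan {a b : V} (h : G.Reachable a b) :
    single b (1 : K) - single a 1 ∈ G.incidenceSpan K := by
  obtain ⟨w⟩ := h
  induction w with
  | nil => simp
  | @cons u v w huv _ ih =>
    have hd : single v (1 : K) - single u 1 ∈ G.incidenceSpan K :=
      Submodule.subset_span ⟨⟨(u, v), huv⟩, rfl⟩
    simpa using add_mem hd ih

theorem ker_lmapDomain_connectedComponentMk :
    LinearMap.ker (lmapDomain K K G.connectedComponentMk) = G.incidenceSpan K := by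
  refine le_antisymm (fun f hf => ?_) (Submodule.span_le.2 ?_)
  · set rep := Function.surjInv (connectedComponentMk_surjective (G := G))
    have hrep (c) : G.connectedComponentMk (rep c) = c := Function.surjInv_eq _ c
    have hcongr (g : V →₀ K) :
        g - mapDomain (rep ∘ G.connectedComponentMk) g ∈ G.incidenceSpan K := by
      induction g using Finsupp.induction_linear with
      | zero => simp
      | add g₁ g₂ h₁ h₂ => simpa [mapDomain_add, add_sub_add_comm] using add_mem h₁ h₂
      | single v a =>
        rw [mapDomain_single, ← smul_single_one, ← smul_single_one _ a, ← smul_sub]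
        refine Submodule.smul_mem _ _ (single_sub_single_mem_incidenceSpan ?_)
        exact ConnectedComponent.exact (hrep _)
    rw [LinearMap.mem_ker, lmapDomain_apply] at hf
    simpa [mapDomain_comp, hf] using hcongr f
  · rintro _ ⟨d, rfl⟩
    simp [mapDomain_sub, mapDomain_single, ConnectedComponent.eq.2 d.adj.reachable]

variable (K G) in
theorem finrank_incidenceSpan_add_card_connectedComponent [Finite V] :
    finrank K (G.incidenceSpan K) + Nat.card G.ConnectedComponent = Nat.card V := by
  have := Fintype.ofFinite V
  have := Fintype.ofFinite G.ConnectedComponent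
  have hsurj : LinearMap.range (lmapDomain K K G.connectedComponentMk) = ⊤ :=
    LinearMap.range_eq_top.2 (mapDomain_surjective connectedComponentMk_surjective)
  have := (lmapDomain K K G.connectedComponentMk).finrank_range_add_finrank_ker
  rw [hsurj, ker_lmapDomain_connectedComponentMk, finrank_top, finrank_finsupp_self,
    finrank_finsupp_self] at this
  simp only [Nat.card_eq_fintype_card]
  omega

end SimpleGraph

theorem Submodule.finrank_map_add_finrank_inf_ker {K M N : Type*} [Field K] [AddCommGroup M]
    [Module K M] [AddCommGroup N] [Module K N] (f : M →ₗ[K] N) (L : Submodule K M)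
    [FiniteDimensional K L] :
    finrank K (L.map f) + finrank K (L ⊓ LinearMap.ker f : Submodule K M) = finrank K L := by
  have := (f.domRestrict L).finrank_range_add_finrank_ker
  rwa [LinearMap.range_domRestrict, LinearMap.ker_domRestrict, ← finrank_map_subtype_eq,
    Submodule.map_comap_subtype] at this

namespace ReactionNetwork

variable {n : ℕ}

def complexMap (n : ℕ) : ((Fin n → ℕ) →₀ ℝ) →ₗ[ℝ] (Fin n → ℝ) :=
  linearCombination ℝ fun y i => (y i : ℝ)

def edgeVector (r : (Fin n → ℕ) × (Fin n → ℕ)) : (Fin n → ℕ) →₀ ℝ :=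
  single r.2 1 - single r.1 1

def edgeSpan (R : Rxn n) : Submodule ℝ ((Fin n → ℕ) →₀ ℝ) :=
  Submodule.span ℝ (edgeVector '' R)

theorem edgeSpan_mono {R R' : Rxn n} (h : R ⊆ R') : edgeSpan R ≤ edgeSpan R' :=
  Submodule.span_mono (Set.image_mono (Finset.coe_subset.2 h))

instance (R : Rxn n) : FiniteDimensional ℝ (edgeSpan R) :=
  FiniteDimensional.span_of_finite ℝ (R.finite_toSet.image _)

theorem fst_mem_complexes {R : Rxn n} {r} (hr : r ∈ R) : r.1 ∈ complexes R :=
  Finset.mem_union_left _ (Finset.mem_image_of_mem _ hr)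

theorem snd_mem_complexes {R : Rxn n} {r} (hr : r ∈ R) : r.2 ∈ complexes R :=
  Finset.mem_union_right _ (Finset.mem_image_of_mem _ hr)

theorem map_complexMap_edgeSpan (R : Rxn n) :
    (edgeSpan R).map (complexMap n) =
      Submodule.span ℝ {d | ∃ r ∈ R, d = fun i => ((r.2 i : ℝ) - (r.1 i : ℝ))} := by
  rw [edgeSpan, Submodule.map_span, ← Set.image_comp]
  congr 1
  ext d
  simp [complexMap, edgeVector, eq_comm, sub_eq_add_neg, funext_iff]

theorem edgeSpan_eq_map_incidenceSpan (R : Rxn n) :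
    edgeSpan R = ((linkGraph R).incidenceSpan ℝ).map (lmapDomain ℝ ℝ Subtype.val) := by
  rw [edgeSpan, SimpleGraph.incidenceSpan, Submodule.map_span]
  refine le_antisymm (Submodule.span_le.2 ?_) (Submodule.span_le.2 ?_)
  · rintro _ ⟨r, hr, rfl⟩
    by_cases hloop : r.1 = r.2
    · simp only [edgeVector, hloop, sub_self, SetLike.mem_coe, zero_mem]
    · let d : (linkGraph R).Dart :=
        ⟨(⟨r.1, fst_mem_complexes hr⟩, ⟨r.2, snd_mem_complexes hr⟩),
          fun h => hloop (congrArg Subtype.val h), Or.inl hr⟩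
      exact Submodule.subset_span ⟨_, ⟨d, rfl⟩, by simp [d, edgeVector, mapDomain_sub]⟩
  · rintro _ ⟨_, ⟨d, rfl⟩, rfl⟩
    obtain ⟨⟨a, b⟩, -, hab | hba⟩ := d
    · exact Submodule.subset_span ⟨_, hab, by simp [edgeVector, mapDomain_sub]⟩
    · simpa [edgeVector, mapDomain_sub] using
        neg_mem (Submodule.subset_span (R := ℝ) (Set.mem_image_of_mem edgeVector hba))

theorem card_complexes_eq (R : Rxn n) :
    (complexes R).card = numLC R + finrank ℝ (edgeSpan R) := by
  rw [edgeSpan_eq_map_incidenceSpan, ← (Submodule.equivMapOfInjective _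
      (mapDomain_injective Subtype.val_injective) _).finrank_eq, numLC, ← Fintype.card_coe,
    ← Nat.card_eq_fintype_card,
    ← (linkGraph R).finrank_incidenceSpan_add_card_connectedComponent ℝ, add_comm]

theorem deficiency_eq_finrank_inf_ker (R : Rxn n) :
    deficiency R = finrank ℝ (edgeSpan R ⊓ LinearMap.ker (complexMap n) : Submodule ℝ _) := by
  have hs := (edgeSpan R).finrank_map_add_finrank_inf_ker (complexMap n)
  rw [map_complexMap_edgeSpan] at hs
  rw [deficiency, stoichDim, card_complexes_eq]
  omega

theorem deficiency_subnetwork_le_general (n : ℕ) (R Rt : Rxn n) (hsub : Rt ⊆ R) :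
    deficiency Rt ≤ deficiency R ∧ (0 < deficiency Rt → 0 < deficiency R) := by
  have hle : deficiency Rt ≤ deficiency R := by
    rw [deficiency_eq_finrank_inf_ker, deficiency_eq_finrank_inf_ker]
    exact_mod_cast Submodule.finrank_mono (inf_le_inf_right _ (edgeSpan_mono hsub))
  exact ⟨hle, hle.trans_lt'⟩

/-- The deficiency of a sub-network is at most the deficiency of
the full network; in particular a positively deficient sub-network forces
positive deficiency. -/
theorem deficiency_subnetwork_le (n : ℕ) (R Rt : Rxn n)
    (hR : ∀ r ∈ R, r.1 ≠ r.2) (hsub : Rt ⊆ R) :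
    deficiency Rt ≤ deficiency R ∧ (0 < deficiency Rt → 0 < deficiency R) :=
  deficiency_subnetwork_le_general n R Rt hsub

end ReactionNetwork
end
end

section
/- Consider the random binary reaction network model G_n with class edge probabilities q_{i,j}(n) ∈ (0,1). Let Q_{0,2}, Q_{1,2}, Q_{2,2} : ℕ → (0, ∞) be sequences with Q_{0,2}(n) ≪ n, Q_{1,2}(n) ≪ n, Q_{2,2}(n) ≪ n, and for each n let k_{i,j}(n) be nonnegative integers with k_{i,j}(n) ≤ Q_{i,j}(n) for (i,j) ∈ {(0,2),(1,2),(2,2)} and k_{i,j}(n) ≤ |E_n^{i,j}| for all five classes. Let A_n be the event that every included pair from E_n^{0,2} is of the form {0, e_a + e_b} with a ≠ b, every included pair from E_n^{1,2} is of the form {e_a, e_b + e_c} with a, b, c pairwise distinct, and every included pair from E_n^{2,2} is of the form {e_a + e_b, e_c + e_d} with a, b, c, d pairwise distinct. Then lim_{n→∞} P(A_n | ⋂_{(i,j)} {M_{i,j}(n) = k_{i,j}(n)}) = 1, and for all sufficiently large n, P(A_n | ⋂_{(i,j)} {M_{i,j}(n) = k_{i,j}(n)}) ≥ (1 − 2Q_{0,2}(n)/n)(1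 − 4Q_{1,2}(n)/n)(1 − 8Q_{2,2}(n)/n). -/
open Finset Filter

noncomputable section

namespace RandomBinaryRN

/-- Complexes are vectors in `ℕⁿ`. -/
abbrev V (n : ℕ) := Fin n → ℕ

/-- The `a`-th unit complex (standard basis vector of `ℕⁿ`). -/
def unit {n : ℕ} (a : Fin n) : V n := Pi.single a 1

/-- The class `E_n^{0,1} = {{0, eᵢ}}` of possible reversible reactions. -/
def E01 (n : ℕ) : Finset (Sym2 (V n)) :=
  Finset.univ.image fun i : Fin n => s((0 : V n), unit i)

/-- The class `E_n^{1,1} = {{eᵢ, eⱼ} : i ≠ j}` of possible reversible reactions. -/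
def E11 (n : ℕ) : Finset (Sym2 (V n)) :=
  ((Finset.univ ×ˢ Finset.univ).filter fun p : Fin n × Fin n => p.1 ≠ p.2).image
    fun p => s(unit p.1, unit p.2)

/-- The class `E_n^{0,2} = {{0, eᵢ + eⱼ}}` of possible reversible reactions. -/
def E02 (n : ℕ) : Finset (Sym2 (V n)) :=
  (Finset.univ ×ˢ Finset.univ).image
    fun p : Fin n × Fin n => s((0 : V n), unit p.1 + unit p.2)

/-- The class `E_n^{1,2} = {{eᵢ, eⱼ + e_k}}` of possible reversible reactions. -/
def E12 (n : ℕ) : Finset (Sym2 (V n)) :=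
  (Finset.univ ×ˢ Finset.univ ×ˢ Finset.univ).image
    fun p : Fin n × Fin n × Fin n => s(unit p.1, unit p.2.1 + unit p.2.2)

/-- The class `E_n^{2,2} = {{eᵢ + eⱼ, e_h + e_k} : eᵢ + eⱼ ≠ e_h + e_k}`. -/
def E22 (n : ℕ) : Finset (Sym2 (V n)) :=
  (((Finset.univ ×ˢ Finset.univ) ×ˢ (Finset.univ ×ˢ Finset.univ)).filter
      fun p : (Fin n × Fin n) × Fin n × Fin n =>
        unit p.1.1 + unit p.1.2 ≠ unit p.2.1 + unit p.2.2).image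
    fun p => s(unit p.1.1 + unit p.1.2, unit p.2.1 + unit p.2.2)

/-- All possible reversible reactions between distinct binary complexes. -/
def allEdges (n : ℕ) : Finset (Sym2 (V n)) :=
  E01 n ∪ E11 n ∪ E02 n ∪ E12 n ∪ E22 n

/-- The inclusion probability of a possible reversible reaction, given the five
class probabilities. -/
def qEdge (n : ℕ) (q01 q11 q02 q12 q22 : ℝ) (ed : Sym2 (V n)) : ℝ :=
  if ed ∈ E01 n then q01
  else if ed ∈ E11 n then q11
  else if ed ∈ E02 n then q02
  else if ed ∈ E12 n then q12
  else q22

/-- The probability that the random graph `G_n` equals the realization `F`: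
each possible reversible reaction is included independently with the probability
of its class. -/
def probF (n : ℕ) (q01 q11 q02 q12 q22 : ℝ) (F : Finset (Sym2 (V n))) : ℝ :=
  (∏ ed ∈ F, qEdge n q01 q11 q02 q12 q22 ed) *
    ∏ ed ∈ allEdges n \ F, (1 - qEdge n q01 q11 q02 q12 q22 ed)

open scoped Classical in
/-- The probability of an event `A` (a predicate on realizations) under the
random binary reaction network model. -/
def Pr (n : ℕ) (q01 q11 q02 q12 q22 : ℝ) (A : Finset (Sym2 (V n)) → Prop) : ℝ :=
  ∑ F ∈ (allEdges n).powerset, if A F then probF n q01 q11 q02 q12 q22 F else 0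

/-- The conditional probability `P(A | B)`. -/
def condPr (n : ℕ) (q01 q11 q02 q12 q22 : ℝ)
    (A B : Finset (Sym2 (V n)) → Prop) : ℝ :=
  Pr n q01 q11 q02 q12 q22 (fun F => A F ∧ B F) / Pr n q01 q11 q02 q12 q22 B

/-- The two endpoints of an unordered pair, as a `Finset`. -/
def endpoints {n : ℕ} (ed : Sym2 (V n)) : Finset (V n) :=
  Sym2.lift ⟨fun a b => {a, b}, fun a b => Finset.pair_comm a b⟩ ed

/-- The set of complexes of a realization. -/
def complexes {n : ℕ} (F : Finset (Sym2 (V n))) : Finset (V n) :=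
  F.biUnion endpoints

/-- The undirected graph on the complexes of a realization, with edge set `F`. -/
def linkGraph {n : ℕ} (F : Finset (Sym2 (V n))) :
    SimpleGraph {y // y ∈ complexes F} where
  Adj a b := a ≠ b ∧ s((a : V n), (b : V n)) ∈ F
  symm := ⟨by
    intro a b h
    refine ⟨h.1.symm, ?_⟩
    rw [Sym2.eq_swap]
    exact h.2⟩
  loopless := ⟨fun a h => h.1 rfl⟩

/-- The number of linkage classes of a realization. -/
def numLC {n : ℕ} (F : Finset (Sym2 (V n))) : ℕ :=
  Nat.card (linkGraph F).ConnectedComponent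

/-- The dimension of the stoichiometric subspace of a realization. -/
def stoichDim {n : ℕ} (F : Finset (Sym2 (V n))) : ℕ :=
  Module.finrank ℝ (Submodule.span ℝ
    {d : Fin n → ℝ | ∃ a b : V n, s(a, b) ∈ F ∧ d = fun i => ((b i : ℝ) - (a i : ℝ))})

/-- The deficiency `δ(F) = |C(F)| - ℓ(F) - s(F)` of a realization. -/
def deficiency {n : ℕ} (F : Finset (Sym2 (V n))) : ℤ :=
  (complexes F).card - numLC F - stoichDim F

/-- `M_{i,j}`: the number of included pairs from a given class. -/
def Mcount {n : ℕ} (Eclass F : Finset (Sym2 (V n))) : ℕ :=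
  (F ∩ Eclass).card

/-- The expected number of included pairs from a class:
`K_{i,j}(n) = |E_n^{i,j}| ⬝ q_{i,j}(n)`. -/
def Kof (Ecl : (n : ℕ) → Finset (Sym2 (V n))) (q : ℕ → ℝ) (n : ℕ) : ℝ :=
  ((Ecl n).card : ℝ) * q n

/-- `a ≪ b` (equivalently `b ≫ a`): `b` is (eventually) positive and
`a n / b n → 0` as `n → ∞`. -/
def ll (a b : ℕ → ℝ) : Prop :=
  (∀ᶠ n in atTop, 0 < b n) ∧ Tendsto (fun n => a n / b n) atTop (nhds 0)

/-- The event `A_n`: every included pair from `E_n^{0,2}`, `E_n^{1,2}`,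
`E_n^{2,2}` involves the maximal number (2, 3, 4 respectively) of distinct
species. -/
def maxSpeciesEvent (n : ℕ) (F : Finset (Sym2 (V n))) : Prop :=
  (∀ ed ∈ F ∩ E02 n, ∃ a b : Fin n, a ≠ b ∧ ed = s((0 : V n), unit a + unit b)) ∧
  (∀ ed ∈ F ∩ E12 n, ∃ a b c : Fin n, a ≠ b ∧ a ≠ c ∧ b ≠ c ∧
    ed = s(unit a, unit b + unit c)) ∧
  (∀ ed ∈ F ∩ E22 n, ∃ a b c d : Fin n, a ≠ b ∧ a ≠ c ∧ a ≠ d ∧ b ≠ c ∧ b ≠ d ∧ c ≠ d ∧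
    ed = s(unit a + unit b, unit c + unit d))

/-- The conditioning event `⋂_{(i,j)} {M_{i,j}(n) = k_{i,j}}`. -/
def countEvent (n : ℕ) (k01 k11 k02 k12 k22 : ℕ) (F : Finset (Sym2 (V n))) : Prop :=
  Mcount (E01 n) F = k01 ∧ Mcount (E11 n) F = k11 ∧ Mcount (E02 n) F = k02 ∧
    Mcount (E12 n) F = k12 ∧ Mcount (E22 n) F = k22


end RandomBinaryRN

/-!
Given the class counts, the weight `probF` of a realization depends only on those counts, so
conditionally on them the realization is uniform among the subsets with the prescribed counts.
The classes being disjoint, its restrictions to the classes are then independent uniform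
`k_{i,j}`-subsets, and the conditional probability of `A_n` is the product of `C(g, k) / C(m, k)`
over the classes `(0,2), (1,2), (2,2)`, where `m` is the size of the class and `g` the number of
its pairs with the maximal number of species. A union bound over the `m - g` other pairs gives
`C(g, k) / C(m, k) ≥ 1 - k (m - g) / m`, and counting shows that `(m - g) / m` is at most
`2 / n`, `4 / n` and `8 / n` for the three classes.
-/

open Function

theorem Nat.choose_succ_le_choose_add_mul {g m : ℕ} (hgm : g ≤ m) (j : ℕ) :
    m.choose (j + 1) ≤ g.choose (j + 1) + (m - g) * (m - 1).choose j := by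
  induction m, hgm using Nat.le_induction with
  | base => simp
  | succ m hgm ih =>
    have hmono : (m - 1).choose j ≤ m.choose j := Nat.choose_le_choose j (Nat.sub_le m 1)
    rw [Nat.choose_succ_succ', Nat.add_sub_cancel, Nat.sub_add_comm hgm, add_one_mul]
    nlinarith [Nat.mul_le_mul_left (m - g) hmono]

theorem one_sub_mul_div_le_choose_div_choose {g m k : ℕ} (hgm : g ≤ m) (hkm : k ≤ m) :
    1 - k * ((m : ℝ) - g) / m ≤ (g.choose k : ℝ) / m.choose k := by
  obtain _ | j := k
  · simp
  obtain _ | l := m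
  · omega
  have hpos : (0 : ℝ) < (l + 1).choose (j + 1) := by exact_mod_cast Nat.choose_pos hkm
  have hunion : ((l + 1).choose (j + 1) : ℝ) ≤ g.choose (j + 1) + (l + 1 - g) * l.choose j := by
    exact_mod_cast Nat.choose_succ_le_choose_add_mul hgm j
  have hpascal : ((l + 1 : ℕ) : ℝ) * l.choose j = (l + 1).choose (j + 1) * (j + 1) := by
    exact_mod_cast Nat.add_one_mul_choose_eq l j
  have hterm : ((j + 1 : ℕ) : ℝ) * ((l + 1 : ℕ) - g) / (l + 1 : ℕ) * (l + 1).choose (j + 1) =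
      (l + 1 - g) * l.choose j := by
    push_cast at hpascal ⊢
    field_simp
    linear_combination (↑l + 1 - ↑g) * hpascal.symm
  rw [le_div_iff₀ hpos, sub_mul, one_mul, hterm]
  linarith

theorem one_sub_le_choose_div_choose {g m k : ℕ} (hgm : g ≤ m) (hkm : k ≤ m) {Q c x : ℝ}
    (hkQ : (k : ℝ) ≤ Q) (hfrac : ((m : ℝ) - g) / m ≤ c / x) :
    1 - c * Q / x ≤ (g.choose k : ℝ) / m.choose k := by
  have hfrac_nonneg : 0 ≤ ((m : ℝ) - g) / m :=
    div_nonneg (sub_nonneg.2 (by exact_mod_cast hgm)) (Nat.cast_nonneg m)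
  have hmul : (k : ℝ) * (((m : ℝ) - g) / m) ≤ Q * (c / x) :=
    mul_le_mul hkQ hfrac hfrac_nonneg ((Nat.cast_nonneg k).trans hkQ)
  calc 1 - c * Q / x = 1 - Q * (c / x) := by ring
    _ ≤ 1 - k * ((m : ℝ) - g) / m := by rw [mul_div_assoc]; linarith
    _ ≤ (g.choose k : ℝ) / m.choose k := one_sub_mul_div_le_choose_div_choose hgm hkm

theorem choose_div_choose_le_one {g m : ℕ} (hgm : g ≤ m) (k : ℕ) :
    (g.choose k : ℝ) / m.choose k ≤ 1 :=
  div_le_one_of_le₀ (by exact_mod_cast Nat.choose_le_choose k hgm) (Nat.cast_nonneg _)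

namespace Finset

variable {ι α : Type*} [Fintype ι] [DecidableEq α]

theorem biUnion_inter_of_pairwise_disjoint_of_subset {E A : ι → Finset α}
    (hE : Pairwise (Disjoint on E)) (hA : ∀ i, A i ⊆ E i) (i : ι) :
    univ.biUnion A ∩ E i = A i := by
  ext x
  simp only [mem_inter, mem_biUnion, mem_univ, true_and]
  refine ⟨fun ⟨⟨j, hj⟩, hi⟩ => ?_, fun h => ⟨⟨i, h⟩, hA i h⟩⟩
  obtain rfl : j = i := by_contra fun hji => disjoint_left.1 (hE hji) (hA j hj) hi
  exact hj

theorem card_filter_powerset_biUnion [DecidableEq ι] {E G : ι → Finset α} (hE : Pairwise (Disjoint on E))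
    (hG : ∀ i, G i ⊆ E i) (k : ι → ℕ) :
    #{F ∈ (univ.biUnion E).powerset | ∀ i, F ∩ E i ⊆ G i ∧ #(F ∩ E i) = k i} =
      ∏ i, (#(G i)).choose (k i) := by
  simp_rw [← card_powersetCard, ← Fintype.card_piFinset]
  refine card_nbij' (fun F i => F ∩ E i) (fun A => univ.biUnion A) ?_ ?_ ?_ ?_ <;>
    intro F hF <;>
    simp only [mem_coe, mem_filter, mem_powerset, Fintype.mem_piFinset, mem_powersetCard] at hF ⊢
  · exact hF.2
  · have hFE : ∀ i, F i ⊆ E i := fun i => (hF i).1.trans (hG i)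
    simp only [biUnion_inter_of_pairwise_disjoint_of_subset hE hFE]
    exact ⟨biUnion_mono fun i _ => hFE i, hF⟩
  · rw [← inter_biUnion, inter_eq_left.2 hF.1]
  · funext i
    exact biUnion_inter_of_pairwise_disjoint_of_subset hE (fun i => (hF i).1.trans (hG i)) i

end Finset

namespace RandomBinaryRN

variable {n : ℕ}

def degree (y : V n) : ℕ := ∑ i, y i

@[simp] lemma degree_zero : degree (0 : V n) = 0 := by simp [degree]

@[simp] lemma degree_unit (a : Fin n) : degree (unit a) = 1 := by simp [degree, unit]

@[simp] lemma degree_add (x y : V n) : degree (x + y) = degree x + degree y := by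
  simp [degree, sum_add_distrib]

lemma unit_injective : Injective (unit : Fin n → V n) := fun a b h => by
  simpa [unit, Pi.single_apply, eq_comm] using congrFun h a

def reactionClass (n : ℕ) : Fin 5 → Finset (Sym2 (V n)) := ![E01 n, E11 n, E02 n, E12 n, E22 n]

def classDegrees : Fin 5 → Sym2 ℕ := ![s(0, 1), s(1, 1), s(0, 2), s(1, 2), s(2, 2)]

lemma classDegrees_injective : Injective classDegrees := by decide

lemma map_degree_of_mem_reactionClass {i : Fin 5} {ed : Sym2 (V n)}
    (h : ed ∈ reactionClass n i) : ed.map degree = classDegrees i := by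
  fin_cases i <;>
    simp only [reactionClass, Fin.reduceFinMk, Matrix.cons_val] at h <;>
    simp only [E01, E11, E02, E12, E22, mem_image] at h <;>
    obtain ⟨_, _, rfl⟩ := h <;> simp [classDegrees]

lemma pairwise_disjoint_reactionClass : Pairwise (Disjoint on reactionClass n) :=
  fun _ _ hij => disjoint_left.2 fun _ hi hj =>
    hij (classDegrees_injective ((map_degree_of_mem_reactionClass hi).symm.trans
      (map_degree_of_mem_reactionClass hj)))

lemma allEdges_eq_biUnion : allEdges n = univ.biUnion (reactionClass n) := by
  simp [allEdges, reactionClass, Fin.univ_succ, union_assoc]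

lemma qEdge_of_mem_reactionClass {q01 q11 q02 q12 q22 : ℝ} {i : Fin 5} {ed : Sym2 (V n)}
    (h : ed ∈ reactionClass n i) :
    qEdge n q01 q11 q02 q12 q22 ed = ![q01, q11, q02, q12, q22] i := by
  have hnot : ∀ j, j ≠ i → ed ∉ reactionClass n j := fun j hji hj =>
    disjoint_left.1 (pairwise_disjoint_reactionClass hji) hj h
  have h0 := hnot 0; have h1 := hnot 1; have h2 := hnot 2; have h3 := hnot 3
  fin_cases i <;> simp_all [qEdge, reactionClass]

def countWeight (n : ℕ) (q : Fin 5 → ℝ) (k : Fin 5 → ℕ) : ℝ :=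
  ∏ i, q i ^ k i * (1 - q i) ^ (#(reactionClass n i) - k i)

lemma countWeight_pos {q : Fin 5 → ℝ} (hq : ∀ i, q i ∈ Set.Ioo (0 : ℝ) 1) (k : Fin 5 → ℕ) :
    0 < countWeight n q k :=
  prod_pos fun i _ => mul_pos (pow_pos (hq i).1 _) (pow_pos (sub_pos.2 (hq i).2) _)

lemma probF_eq_countWeight {q01 q11 q02 q12 q22 : ℝ} {F : Finset (Sym2 (V n))}
    (hF : F ⊆ allEdges n) :
    probF n q01 q11 q02 q12 q22 F =
      countWeight n ![q01, q11, q02, q12, q22] fun i => #(F ∩ reactionClass n i) := by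
  have hdisj : ((univ : Finset (Fin 5)) : Set (Fin 5)).PairwiseDisjoint
      fun i => F ∩ reactionClass n i :=
    fun i _ j _ hij =>
      (pairwise_disjoint_reactionClass hij).mono inter_subset_right inter_subset_right
  have hdisj' : ((univ : Finset (Fin 5)) : Set (Fin 5)).PairwiseDisjoint
      fun i => reactionClass n i \ F :=
    fun i _ j _ hij => (pairwise_disjoint_reactionClass hij).mono sdiff_subset sdiff_subset
  have hF' : F = univ.biUnion fun i => F ∩ reactionClass n i := by
    rw [← inter_biUnion, ← allEdges_eq_biUnion, inter_eq_left.2 hF]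
  have hcompl : allEdges n \ F = univ.biUnion fun i => reactionClass n i \ F := by
    ext; simp [allEdges_eq_biUnion]
  rw [probF, hcompl, prod_biUnion hdisj', hF', prod_biUnion hdisj, ← prod_mul_distrib, ← hF',
    countWeight]
  refine prod_congr rfl fun i _ => ?_
  rw [prod_congr rfl fun ed hed => qEdge_of_mem_reactionClass (mem_inter.1 hed).2,
    prod_congr rfl fun ed hed => congrArg (1 - ·) (qEdge_of_mem_reactionClass (mem_sdiff.1 hed).1),
    prod_const, prod_const, card_sdiff]

lemma countEvent_iff {k01 k11 k02 k12 k22 : ℕ} {F : Finset (Sym2 (V n))} :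
    countEvent n k01 k11 k02 k12 k22 F ↔
      ∀ i, #(F ∩ reactionClass n i) = ![k01, k11, k02, k12, k22] i := by
  simp [countEvent, Mcount, Fin.forall_fin_succ, reactionClass]

section Uniform

open scoped Classical

variable {q01 q11 q02 q12 q22 : ℝ} {k01 k11 k02 k12 k22 : ℕ}

lemma Pr_eq_countWeight_mul_card {P : Finset (Sym2 (V n)) → Prop}
    (hP : ∀ F, P F → countEvent n k01 k11 k02 k12 k22 F) :
    Pr n q01 q11 q02 q12 q22 P =
      countWeight n ![q01, q11, q02, q12, q22] ![k01, k11, k02, k12, k22] *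
        #{F ∈ (allEdges n).powerset | P F} := by
  rw [Pr, ← sum_filter, mul_comm, ← nsmul_eq_mul, ← sum_const]
  refine sum_congr rfl fun F hF => ?_
  rw [mem_filter, mem_powerset] at hF
  rw [probF_eq_countWeight hF.1]
  exact congrArg _ (funext (countEvent_iff.1 (hP F hF.2)))

lemma condPr_countEvent_eq_card_div_card
    (hq : ∀ i, ![q01, q11, q02, q12, q22] i ∈ Set.Ioo (0 : ℝ) 1) (A : Finset (Sym2 (V n)) → Prop) :
    condPr n q01 q11 q02 q12 q22 A (countEvent n k01 k11 k02 k12 k22) =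
      (#{F ∈ (allEdges n).powerset | A F ∧ countEvent n k01 k11 k02 k12 k22 F} : ℝ) /
        #{F ∈ (allEdges n).powerset | countEvent n k01 k11 k02 k12 k22 F} := by
  rw [condPr, Pr_eq_countWeight_mul_card fun _ h => h.2, Pr_eq_countWeight_mul_card fun _ h => h,
    mul_div_mul_left _ _ (countWeight_pos hq _).ne']
  -- the two sides differ only in their `Decidable` instances
  congr!

end Uniform

def maxSpecies02 (n : ℕ) : Finset (Sym2 (V n)) :=
  {ed ∈ E02 n | ∃ a b : Fin n, a ≠ b ∧ ed = s((0 : V n), unit a + unit b)}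

def maxSpecies12 (n : ℕ) : Finset (Sym2 (V n)) :=
  {ed ∈ E12 n | ∃ a b c : Fin n, a ≠ b ∧ a ≠ c ∧ b ≠ c ∧ ed = s(unit a, unit b + unit c)}

def maxSpecies22 (n : ℕ) : Finset (Sym2 (V n)) :=
  {ed ∈ E22 n | ∃ a b c d : Fin n, a ≠ b ∧ a ≠ c ∧ a ≠ d ∧ b ≠ c ∧ b ≠ d ∧ c ≠ d ∧
    ed = s(unit a + unit b, unit c + unit d)}

lemma maxSpecies02_subset : maxSpecies02 n ⊆ E02 n := filter_subset _ _

lemma maxSpecies12_subset : maxSpecies12 n ⊆ E12 n := filter_subset _ _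

lemma maxSpecies22_subset : maxSpecies22 n ⊆ E22 n := filter_subset _ _

def maxSpeciesPairs (n : ℕ) : Fin 5 → Finset (Sym2 (V n)) :=
  ![E01 n, E11 n, maxSpecies02 n, maxSpecies12 n, maxSpecies22 n]

lemma maxSpeciesPairs_subset (i : Fin 5) : maxSpeciesPairs n i ⊆ reactionClass n i := by
  fin_cases i
  exacts [subset_refl _, subset_refl _, maxSpecies02_subset, maxSpecies12_subset,
    maxSpecies22_subset]

lemma maxSpeciesEvent_iff {F : Finset (Sym2 (V n))} :
    maxSpeciesEvent n F ↔ ∀ i, F ∩ reactionClass n i ⊆ maxSpeciesPairs n i := by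
  simp [maxSpeciesEvent, Fin.forall_fin_succ, reactionClass, maxSpeciesPairs, subset_iff,
    maxSpecies02, maxSpecies12, maxSpecies22, imp_and]

section Counting

open scoped Classical

variable {k01 k11 k02 k12 k22 : ℕ}

lemma card_countEvent :
    #{F ∈ (allEdges n).powerset | countEvent n k01 k11 k02 k12 k22 F} =
      ∏ i, (#(reactionClass n i)).choose (![k01, k11, k02, k12, k22] i) := by
  convert card_filter_powerset_biUnion pairwise_disjoint_reactionClass (fun _ => subset_refl _) _
    using 2
  rw [allEdges_eq_biUnion]
  ext F
  simp [countEvent_iff]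

lemma card_maxSpeciesEvent_countEvent :
    #{F ∈ (allEdges n).powerset | maxSpeciesEvent n F ∧ countEvent n k01 k11 k02 k12 k22 F} =
      ∏ i, (#(maxSpeciesPairs n i)).choose (![k01, k11, k02, k12, k22] i) := by
  convert card_filter_powerset_biUnion pairwise_disjoint_reactionClass maxSpeciesPairs_subset _
    using 2
  rw [allEdges_eq_biUnion]
  ext F
  simp [countEvent_iff, maxSpeciesEvent_iff, forall_and]

end Counting

lemma condPr_maxSpeciesEvent_countEvent {q01 q11 q02 q12 q22 : ℝ} {k01 k11 k02 k12 k22 : ℕ}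
    (hq : ∀ i, ![q01, q11, q02, q12, q22] i ∈ Set.Ioo (0 : ℝ) 1)
    (h01 : k01 ≤ #(E01 n)) (h11 : k11 ≤ #(E11 n)) :
    condPr n q01 q11 q02 q12 q22 (maxSpeciesEvent n) (countEvent n k01 k11 k02 k12 k22) =
      ((#(maxSpecies02 n)).choose k02 : ℝ) / (#(E02 n)).choose k02 *
        (((#(maxSpecies12 n)).choose k12 : ℝ) / (#(E12 n)).choose k12) *
        (((#(maxSpecies22 n)).choose k22 : ℝ) / (#(E22 n)).choose k22) := by
  rw [condPr_countEvent_eq_card_div_card hq, card_maxSpeciesEvent_countEvent, card_countEvent]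
  push_cast
  rw [← prod_div_distrib, Fin.prod_univ_five]
  have hE01 : ((#(E01 n)).choose k01 : ℝ) ≠ 0 := by exact_mod_cast (Nat.choose_pos h01).ne'
  have hE11 : ((#(E11 n)).choose k11 : ℝ) ≠ 0 := by exact_mod_cast (Nat.choose_pos h11).ne'
  simp [maxSpeciesPairs, reactionClass, hE01, hE11, mul_assoc]

def pairComplex : Sym2 (Fin n) → V n :=
  Sym2.lift ⟨fun a b => unit a + unit b, fun _ _ => add_comm _ _⟩

@[simp] lemma pairComplex_mk (a b : Fin n) : pairComplex s(a, b) = unit a + unit b := rfl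

@[simp] lemma degree_pairComplex (z : Sym2 (Fin n)) : degree (pairComplex z) = 2 := by
  induction z using Sym2.ind with
  | _ a b => simp

lemma pairComplex_ne_zero_iff {z : Sym2 (Fin n)} {i : Fin n} : pairComplex z i ≠ 0 ↔ i ∈ z := by
  induction z using Sym2.ind with
  | _ a b => simp [unit, Pi.single_apply]; tauto

lemma pairComplex_injective : Injective (pairComplex (n := n)) := fun _ _ h =>
  Sym2.ext fun i => by rw [← pairComplex_ne_zero_iff, ← pairComplex_ne_zero_iff, h]

lemma E02_eq_image : E02 n = univ.image fun z : Sym2 (Fin n) => s(0, pairComplex z) := by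
  rw [← image_univ_of_surjective Sym2.mk_surjective, image_image, ← univ_product_univ]
  rfl

lemma E12_eq_image :
    E12 n = univ.image fun p : Fin n × Sym2 (Fin n) => s(unit p.1, pairComplex p.2) := by
  rw [← image_univ_of_surjective (surjective_id.prodMap Sym2.mk_surjective), image_image,
    ← univ_product_univ, ← univ_product_univ]
  rfl

lemma E22_eq_image :
    E22 n = ({z | ¬z.IsDiag} : Finset (Sym2 (Sym2 (Fin n)))).image (Sym2.map pairComplex) := by
  have hsurj : Surjective fun p : (Fin n × Fin n) × Fin n × Fin n =>
      s(s(p.1.1, p.1.2), s(p.2.1, p.2.2)) :=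
    Sym2.mk_surjective.comp (Sym2.mk_surjective.prodMap Sym2.mk_surjective)
  rw [← image_univ_of_surjective hsurj, filter_image, image_image, ← univ_product_univ,
    ← univ_product_univ]
  simp only [E22, comp_def, Sym2.mk_isDiag_iff, Sym2.map_mk]
  congr 1
  refine filter_congr fun p _ => not_congr ?_
  exact pairComplex_injective.eq_iff (a := s(p.1.1, p.1.2)) (b := s(p.2.1, p.2.2))

lemma card_E02 : #(E02 n) = (n + 1).choose 2 := by
  rw [E02_eq_image, card_image_of_injective _ fun _ _ h =>
    pairComplex_injective (Sym2.congr_right.1 h), card_univ, Sym2.card, Fintype.card_fin]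

lemma card_E12 : #(E12 n) = n * (n + 1).choose 2 := by
  rw [E12_eq_image, card_image_of_injective, card_univ, Fintype.card_prod, Sym2.card,
    Fintype.card_fin]
  rintro ⟨a, z⟩ ⟨b, w⟩ h
  rcases Sym2.eq_iff.1 h with ⟨hab, hzw⟩ | ⟨haw, -⟩
  · exact Prod.ext (unit_injective hab) (pairComplex_injective hzw)
  · simpa using congrArg degree haw

lemma card_E22 : #(E22 n) = ((n + 1).choose 2).choose 2 := by
  rw [E22_eq_image, card_image_of_injective _ (Sym2.map.injective pairComplex_injective),
    ← Fintype.card_subtype, Sym2.card_subtype_not_diag, Sym2.card, Fintype.card_fin]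

lemma card_E02_sdiff_maxSpecies02_le : #(E02 n \ maxSpecies02 n) ≤ n := by
  have hsub : E02 n \ maxSpecies02 n ⊆ univ.image fun a => s(0, unit a + unit a) := by
    intro ed hed
    obtain ⟨hE, hnot⟩ := mem_sdiff.1 hed
    obtain ⟨⟨a, b⟩, -, rfl⟩ := mem_image.1 hE
    obtain rfl | hab := eq_or_ne a b
    · exact mem_image_of_mem _ (mem_univ a)
    · exact absurd (mem_filter.2 ⟨hE, a, b, hab, rfl⟩) hnot
  simpa using (card_le_card hsub).trans card_image_le

lemma card_E12_sdiff_maxSpecies12_le : #(E12 n \ maxSpecies12 n) ≤ 2 * (n * n) := by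
  have hsub : E12 n \ maxSpecies12 n ⊆
      (univ.image fun p : Fin n × Fin n => s(unit p.1, unit p.2 + unit p.2)) ∪
        univ.image fun p : Fin n × Fin n => s(unit p.1, unit p.1 + unit p.2) := by
    intro ed hed
    obtain ⟨hE, hnot⟩ := mem_sdiff.1 hed
    obtain ⟨⟨i, a, b⟩, -, rfl⟩ := mem_image.1 hE
    rw [mem_union]
    by_cases hab : a = b
    · exact Or.inl (mem_image.2 ⟨(i, a), mem_univ _, by rw [hab]⟩)
    by_cases hia : i = a
    · exact Or.inr (mem_image.2 ⟨(i, b), mem_univ _, by rw [hia]⟩)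
    by_cases hib : i = b
    · exact Or.inr (mem_image.2 ⟨(i, a), mem_univ _, by rw [hib, add_comm]⟩)
    exact absurd (mem_filter.2 ⟨hE, i, a, b, hia, hib, hab, rfl⟩) hnot
  calc #(E12 n \ maxSpecies12 n) ≤ _ := (card_le_card hsub).trans (card_union_le _ _)
    _ ≤ n * n + n * n :=
      add_le_add (card_image_le.trans (by simp)) (card_image_le.trans (by simp))
    _ = 2 * (n * n) := (two_mul _).symm

lemma card_E22_sdiff_maxSpecies22_le :
    #(E22 n \ maxSpecies22 n) ≤ 2 * (n * (n + 1).choose 2) := by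
  have hsub : E22 n \ maxSpecies22 n ⊆
      (univ.image fun p : Fin n × Sym2 (Fin n) => s(unit p.1 + unit p.1, pairComplex p.2)) ∪
        univ.image fun p : Fin n × Sym2 (Fin n) => p.2.map (unit p.1 + unit ·) := by
    intro ed hed
    obtain ⟨hE, hnot⟩ := mem_sdiff.1 hed
    obtain ⟨⟨⟨a, b⟩, c, d⟩, -, rfl⟩ := mem_image.1 hE
    rw [mem_union]
    by_cases hab : a = b
    · exact Or.inl (mem_image.2 ⟨(a, s(c, d)), mem_univ _, by simp [hab]⟩)
    by_cases hcd : c = d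
    · exact Or.inl (mem_image.2 ⟨(c, s(a, b)), mem_univ _, by simp [hcd, Sym2.eq_swap]⟩)
    by_cases hac : a = c
    · exact Or.inr (mem_image.2 ⟨(a, s(b, d)), mem_univ _, by simp [hac]⟩)
    by_cases had : a = d
    · exact Or.inr (mem_image.2 ⟨(a, s(b, c)), mem_univ _, by simp [had, add_comm]⟩)
    by_cases hbc : b = c
    · exact Or.inr (mem_image.2 ⟨(b, s(a, d)), mem_univ _, by simp [hbc, add_comm]⟩)
    by_cases hbd : b = d
    · exact Or.inr (mem_image.2 ⟨(b, s(a, c)), mem_univ _, by simp [hbd, add_comm]⟩)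
    exact absurd (mem_filter.2 ⟨hE, a, b, c, d, hab, hac, had, hbc, hbd, hcd, rfl⟩) hnot
  calc #(E22 n \ maxSpecies22 n) ≤ _ := (card_le_card hsub).trans (card_union_le _ _)
    _ ≤ n * (n + 1).choose 2 + n * (n + 1).choose 2 :=
      add_le_add (card_image_le.trans (by simp [Sym2.card]))
        (card_image_le.trans (by simp [Sym2.card]))
    _ = 2 * (n * (n + 1).choose 2) := (two_mul _).symm

lemma cast_choose_two_succ (n : ℕ) : ((n + 1).choose 2 : ℝ) = (n + 1) * n / 2 := by
  rw [Nat.cast_choose_two]; push_cast; ring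

lemma sub_div_card_E02_le (hn : 0 < n) :
    ((#(E02 n) : ℝ) - #(maxSpecies02 n)) / #(E02 n) ≤ 2 / n := by
  have hbad : (#(E02 n) : ℝ) - #(maxSpecies02 n) ≤ n := by
    rw [← cast_card_sdiff maxSpecies02_subset]
    exact_mod_cast card_E02_sdiff_maxSpecies02_le
  have hcard : (#(E02 n) : ℝ) = (n + 1) * n / 2 := by rw [card_E02, cast_choose_two_succ]
  have hn' : (0 : ℝ) < n := by exact_mod_cast hn
  rw [div_le_div_iff₀ (by rw [hcard]; positivity) hn', hcard]
  nlinarith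

lemma sub_div_card_E12_le (hn : 0 < n) :
    ((#(E12 n) : ℝ) - #(maxSpecies12 n)) / #(E12 n) ≤ 4 / n := by
  have hbad : (#(E12 n) : ℝ) - #(maxSpecies12 n) ≤ 2 * (n * n) := by
    rw [← cast_card_sdiff maxSpecies12_subset]
    exact_mod_cast card_E12_sdiff_maxSpecies12_le
  have hcard : (#(E12 n) : ℝ) = n * ((n + 1) * n / 2) := by
    rw [card_E12, Nat.cast_mul, cast_choose_two_succ]
  have hn' : (0 : ℝ) < n := by exact_mod_cast hn
  rw [div_le_div_iff₀ (by rw [hcard]; positivity) hn', hcard]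
  nlinarith

lemma sub_div_card_E22_le (hn : 2 ≤ n) :
    ((#(E22 n) : ℝ) - #(maxSpecies22 n)) / #(E22 n) ≤ 8 / n := by
  have hbad : (#(E22 n) : ℝ) - #(maxSpecies22 n) ≤ 2 * (n * ((n + 1) * n / 2)) := by
    rw [← cast_card_sdiff maxSpecies22_subset, ← cast_choose_two_succ]
    exact_mod_cast card_E22_sdiff_maxSpecies22_le
  have hcard : (#(E22 n) : ℝ) = (n + 1) * n / 2 * ((n + 1) * n / 2 - 1) / 2 := by
    rw [card_E22, Nat.cast_choose_two, cast_choose_two_succ]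
  have hn' : (2 : ℝ) ≤ n := by exact_mod_cast hn
  have hN : (3 : ℝ) ≤ (n + 1) * n / 2 := by nlinarith
  rw [div_le_div_iff₀ (by rw [hcard]; nlinarith) (by linarith)]
  calc ((#(E22 n) : ℝ) - #(maxSpecies22 n)) * n ≤ 2 * (n * ((n + 1) * n / 2)) * n := by gcongr
    _ ≤ 8 * #(E22 n) := by rw [hcard]; nlinarith

lemma ll.tendsto_const_mul_div {Q : ℕ → ℝ} (h : ll Q fun n => (n : ℝ)) (c : ℝ) :
    Tendsto (fun n : ℕ => c * Q n / n) atTop (nhds 0) := by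
  simpa [mul_div_assoc] using h.2.const_mul c

lemma ll.tendsto_one_sub_const_mul_div {Q : ℕ → ℝ} (h : ll Q fun n => (n : ℝ)) (c : ℝ) :
    Tendsto (fun n : ℕ => 1 - c * Q n / n) atTop (nhds 1) := by
  simpa using tendsto_const_nhds.sub (h.tendsto_const_mul_div c)

theorem condProb_maxSpecies_tendsto_one_general
    (q01 q11 q02 q12 q22 : ℕ → ℝ)
    (hq : ∀ n, q01 n ∈ Set.Ioo (0 : ℝ) 1 ∧ q11 n ∈ Set.Ioo (0 : ℝ) 1 ∧
      q02 n ∈ Set.Ioo (0 : ℝ) 1 ∧ q12 n ∈ Set.Ioo (0 : ℝ) 1 ∧ q22 n ∈ Set.Ioo (0 : ℝ) 1)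
    (Q02 Q12 Q22 : ℕ → ℝ)
    (hQ02 : ll Q02 (fun n => (n : ℝ))) (hQ12 : ll Q12 (fun n => (n : ℝ)))
    (hQ22 : ll Q22 (fun n => (n : ℝ)))
    (k01 k11 k02 k12 k22 : ℕ → ℕ)
    (hk02 : ∀ n, (k02 n : ℝ) ≤ Q02 n) (hk12 : ∀ n, (k12 n : ℝ) ≤ Q12 n)
    (hk22 : ∀ n, (k22 n : ℝ) ≤ Q22 n)
    (hcard : ∀ n, k01 n ≤ (E01 n).card ∧ k11 n ≤ (E11 n).card ∧ k02 n ≤ (E02 n).card ∧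
      k12 n ≤ (E12 n).card ∧ k22 n ≤ (E22 n).card) :
    Tendsto (fun n => condPr n (q01 n) (q11 n) (q02 n) (q12 n) (q22 n)
        (maxSpeciesEvent n) (countEvent n (k01 n) (k11 n) (k02 n) (k12 n) (k22 n)))
      atTop (nhds 1) ∧
    ∀ᶠ n in atTop,
      (1 - 2 * Q02 n / n) * (1 - 4 * Q12 n / n) * (1 - 8 * Q22 n / n) ≤
        condPr n (q01 n) (q11 n) (q02 n) (q12 n) (q22 n)
          (maxSpeciesEvent n) (countEvent n (k01 n) (k11 n) (k02 n) (k12 n) (k22 n)) := by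
  have hformula n := condPr_maxSpeciesEvent_countEvent (k02 := k02 n) (k12 := k12 n)
    (k22 := k22 n) (by simpa [Fin.forall_fin_succ] using hq n) (hcard n).1 (hcard n).2.1
  have hlower : ∀ᶠ n : ℕ in atTop,
      (1 - 2 * Q02 n / n) * (1 - 4 * Q12 n / n) * (1 - 8 * Q22 n / n) ≤
        condPr n (q01 n) (q11 n) (q02 n) (q12 n) (q22 n)
          (maxSpeciesEvent n) (countEvent n (k01 n) (k11 n) (k02 n) (k12 n) (k22 n)) := by
    filter_upwards [eventually_ge_atTop 2,
      (hQ12.tendsto_const_mul_div 4).eventually (ge_mem_nhds one_pos),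
      (hQ22.tendsto_const_mul_div 8).eventually (ge_mem_nhds one_pos)] with n hn h12 h22
    obtain ⟨-, -, c02, c12, c22⟩ := hcard n
    rw [hformula n]
    gcongr
    · exact one_sub_le_choose_div_choose (card_le_card maxSpecies02_subset) c02 (hk02 n)
        (sub_div_card_E02_le (by omega))
    · exact one_sub_le_choose_div_choose (card_le_card maxSpecies12_subset) c12 (hk12 n)
        (sub_div_card_E12_le (by omega))
    · exact one_sub_le_choose_div_choose (card_le_card maxSpecies22_subset) c22 (hk22 n)
        (sub_div_card_E22_le hn)
  have hupper n : condPr n (q01 n) (q11 n) (q02 n) (q12 n) (q22 n)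
      (maxSpeciesEvent n) (countEvent n (k01 n) (k11 n) (k02 n) (k12 n) (k22 n)) ≤ 1 := by
    rw [hformula n]
    refine mul_le_one₀ (mul_le_one₀ ?_ (by positivity) ?_) (by positivity) ?_ <;>
      exact choose_div_choose_le_one (card_le_card (filter_subset _ _)) _
  refine ⟨tendsto_of_tendsto_of_tendsto_of_le_of_le' ?_ tendsto_const_nhds hlower
    (Eventually.of_forall hupper), hlower⟩
  simpa using ((hQ02.tendsto_one_sub_const_mul_div 2).mul
    (hQ12.tendsto_one_sub_const_mul_div 4)).mul (hQ22.tendsto_one_sub_const_mul_div 8)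

/-- Conditioned on the reaction counts `M_{i,j}(n) = k_{i,j}(n)`
with `k_{i,j}(n) ≤ Q_{i,j}(n) ≪ n` for the classes `(0,2), (1,2), (2,2)`, the
probability that every realized reaction has the maximal number of distinct
species tends to one, with the explicit lower bound
`(1 - 2Q_{0,2}(n)/n)(1 - 4Q_{1,2}(n)/n)(1 - 8Q_{2,2}(n)/n)` eventually. -/
theorem condProb_maxSpecies_tendsto_one
    (q01 q11 q02 q12 q22 : ℕ → ℝ)
    (hq : ∀ n, q01 n ∈ Set.Ioo (0 : ℝ) 1 ∧ q11 n ∈ Set.Ioo (0 : ℝ) 1 ∧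
      q02 n ∈ Set.Ioo (0 : ℝ) 1 ∧ q12 n ∈ Set.Ioo (0 : ℝ) 1 ∧ q22 n ∈ Set.Ioo (0 : ℝ) 1)
    (Q02 Q12 Q22 : ℕ → ℝ)
    (hQpos : ∀ n, 0 < Q02 n ∧ 0 < Q12 n ∧ 0 < Q22 n)
    (hQ02 : ll Q02 (fun n => (n : ℝ))) (hQ12 : ll Q12 (fun n => (n : ℝ)))
    (hQ22 : ll Q22 (fun n => (n : ℝ)))
    (k01 k11 k02 k12 k22 : ℕ → ℕ)
    (hk02 : ∀ n, (k02 n : ℝ) ≤ Q02 n) (hk12 : ∀ n, (k12 n : ℝ) ≤ Q12 n)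
    (hk22 : ∀ n, (k22 n : ℝ) ≤ Q22 n)
    (hcard : ∀ n, k01 n ≤ (E01 n).card ∧ k11 n ≤ (E11 n).card ∧ k02 n ≤ (E02 n).card ∧
      k12 n ≤ (E12 n).card ∧ k22 n ≤ (E22 n).card) :
    Tendsto (fun n => condPr n (q01 n) (q11 n) (q02 n) (q12 n) (q22 n)
        (maxSpeciesEvent n) (countEvent n (k01 n) (k11 n) (k02 n) (k12 n) (k22 n)))
      atTop (nhds 1) ∧
    ∀ᶠ n in atTop,
      (1 - 2 * Q02 n / n) * (1 - 4 * Q12 n / n) * (1 - 8 * Q22 n / n) ≤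
        condPr n (q01 n) (q11 n) (q02 n) (q12 n) (q22 n)
          (maxSpeciesEvent n) (countEvent n (k01 n) (k11 n) (k02 n) (k12 n) (k22 n)) :=
  condProb_maxSpecies_tendsto_one_general q01 q11 q02 q12 q22 hq Q02 Q12 Q22 hQ02 hQ12 hQ22 k01 k11
    k02 k12 k22 hk02 hk12 hk22 hcard

end RandomBinaryRN
end
end

section
/- Let n ≥ 1 and let V be a finite family of vectors in ℝⁿ consisting of: i₁ vectors of the form ±e_a; i₂ vectors of the form ±(e_b − e_a) with a ≠ b; i₃ vectors of the form ±(e_a + e_b) with a ≠ b; i₄ vectors of the form ±(e_a + e_b − e_c) with a, b, c pairwise distinct; and i₅ vectors of the form ±(e_a + e_b − e_c − e_d) with a, b, c, d pairwise distinct (here e_a denotes the a-th standard basis vector). Suppose the family V is minimally dependent (linearly dependent, but every proper subfamily is linearly independent) and i₃ + i₄ + i₅ > 0. Then i₁ ≤ 2i₃ + 3i₄ + 4i₅. -/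
/-!
Call two species equivalent when `e_a - e_b` lies in the span `W` of the vectors `±(e_b - e_a)`.
Two vectors `±e_a`, `±e_b` with equivalent species, together with the vectors spanning `W`, are
dependent, and since some vector of the other three kinds exists this is a proper subfamily; so
distinct vectors `±e_a` sit in distinct classes. Summing the coordinates over the class of such
an `a` kills every vector `±(e_b - e_a)` and every other `±e_b`; applied to a dependence relation
with all coefficients nonzero it shows that the class must meet the support of a vector of one of
the other three kinds. Those supports have at most `2`, `3`, `4` elements, which bounds `i₁`.
-/

open Finset

noncomputable section

/-- A finite family of vectors is minimally dependent if it is linearly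
dependent but every proper subfamily is linearly independent. -/
def MinimallyDependent {m n : ℕ} (v : Fin m → (Fin n → ℝ)) : Prop :=
  ¬ LinearIndependent ℝ v ∧
    ∀ s : Finset (Fin m), s ≠ Finset.univ →
      LinearIndependent ℝ (fun j : {x // x ∈ s} => v j)

/-- The `a`-th standard basis vector of `ℝⁿ`. -/
def er {n : ℕ} (a : Fin n) : Fin n → ℝ := Pi.single a 1

open Submodule

theorem card_le_sum_card_of_injective {α β γ : Type*} [Fintype α] [DecidableEq γ]
    {R : Finset β} {A : β → Finset γ} {f : α → γ} (hf : Function.Injective f)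
    (hA : ∀ j, ∃ k ∈ R, f j ∈ A k) :
    Fintype.card α ≤ ∑ k ∈ R, #(A k) :=
  calc Fintype.card α = #(univ.image f) := (card_image_of_injective _ hf).symm
    _ ≤ #(R.biUnion A) := card_le_card fun y hy => by
        obtain ⟨j, -, rfl⟩ := mem_image.1 hy
        obtain ⟨k, hk, hjk⟩ := hA j
        exact mem_biUnion.2 ⟨k, hk, hjk⟩
    _ ≤ ∑ k ∈ R, #(A k) := card_biUnion_le

theorem sum_val_filter_two_le_eq {ι : Type*} [Fintype ι] (t : ι → Fin 5) :
    ∑ k ∈ univ.filter (fun k => 2 ≤ t k), (t k : ℕ) =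
      2 * #{k | t k = 2} + 3 * #{k | t k = 3} + 4 * #{k | t k = 4} := by
  rw [← sum_fiberwise _ t, Fin.sum_univ_five]
  have hfiber : ∀ i : Fin 5, ∑ k ∈ {k | 2 ≤ t k} with t k = i, (t k : ℕ) =
      if 2 ≤ i then i * #{k | t k = i} else 0 := fun i => by
    split_ifs with hi
    · rw [sum_congr rfl fun k hk => congrArg Fin.val (mem_filter.1 hk).2, sum_const, smul_eq_mul,
        mul_comm, filter_filter, filter_congr (q := fun k => t k = i) fun k _ => by omega]
    · exact sum_eq_zero fun k hk => by simp only [mem_filter] at hk; omega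
  simp [hfiber]

namespace MinimallyDependent

variable {m n : ℕ} {v : Fin m → Fin n → ℝ}

theorem exists_sum_smul_eq_zero_forall_ne_zero (hmd : MinimallyDependent v) :
    ∃ c : Fin m → ℝ, ∑ j, c j • v j = 0 ∧ ∀ j, c j ≠ 0 := by
  obtain ⟨c, hc, j₀, hj₀⟩ := Fintype.not_linearIndependent_iff.1 hmd.1
  refine ⟨c, hc, fun j hj => ?_⟩
  have hproper : univ.erase j ≠ univ := (erase_ssubset (mem_univ j)).ne
  have hzero := Fintype.linearIndependent_iff.1 (hmd.2 _ hproper) (fun i => c i) (by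
    rw [sum_coe_sort _ (fun i => c i • v i), sum_erase _ (by rw [hj, zero_smul])]
    exact hc)
  exact hj₀ (hzero ⟨j₀, mem_erase.2 ⟨fun h => hj₀ (h ▸ hj), mem_univ _⟩⟩)

theorem notMem_span_image (hmd : MinimallyDependent v) {s : Finset (Fin m)} {j : Fin m}
    (hj : j ∉ s) (hproper : insert j s ≠ univ) : v j ∉ span ℝ (v '' s) := by
  have hind : LinearIndepOn ℝ v (insert j s : Finset (Fin m)) := hmd.2 _ hproper
  rw [coe_insert, linearIndepOn_insert (by simpa using hj)] at hind
  exact hind.2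

end MinimallyDependent

section BinaryNetwork

variable {m n : ℕ} (v : Fin m → Fin n → ℝ) (t : Fin m → Fin 5)

def typeOneSpan : Submodule ℝ (Fin n → ℝ) := span ℝ (v '' {l | t l = 1})

/-- Species joined by a chain of reactions `S_a ⇌ S_b` get the same class. -/
def speciesClass (a : Fin n) : (Fin n → ℝ) ⧸ typeOneSpan v t := (typeOneSpan v t).mkQ (er a)

variable {v t}

theorem speciesClass_eq_iff {a b : Fin n} :
    speciesClass v t a = speciesClass v t b ↔ er a - er b ∈ typeOneSpan v t :=
  Submodule.Quotient.eq _

theorem eq_of_speciesClass_eq (hmd : MinimallyDependent v) (hR : ∃ k, 2 ≤ t k)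
    {j l : Fin m} {a b : Fin n} (hj : t j = 0) (hl : t l = 0)
    (ha : v j = er a ∨ v j = -er a) (hb : v l = er b ∨ v l = -er b)
    (hab : speciesClass v t a = speciesClass v t b) : j = l := by
  by_contra hjl
  obtain ⟨k, hk⟩ := hR
  set s := insert l (univ.filter fun i => t i = 1)
  have hjs : j ∉ s := by simp [s, hjl, hj]
  have hproper : insert j s ≠ univ := fun h => by
    have hks : k ∈ insert j s := h ▸ mem_univ k
    simp only [s, mem_insert, mem_filter, mem_univ, true_and] at hks
    rcases hks with rfl | rfl | h1 <;> omega
  apply hmd.notMem_span_image hjs hproper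
  have hW : typeOneSpan v t ≤ span ℝ (v '' s) :=
    span_mono (Set.image_mono fun i (hi : t i = 1) => by simp [s, hi])
  have hvl : v l ∈ span ℝ (v '' s) := subset_span ⟨l, by simp [s], rfl⟩
  have heb : er b ∈ span ℝ (v '' s) := by
    rcases hb with h | h
    · exact h ▸ hvl
    · simpa [h] using neg_mem hvl
  have hea : er a ∈ span ℝ (v '' s) := by
    rw [← sub_add_cancel (er a) (er b)]
    exact add_mem (hW (speciesClass_eq_iff.1 hab)) heb
  rcases ha with h | h <;> rw [h]
  · exact hea
  · exact neg_mem hea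

open scoped Classical in
theorem sum_speciesClass_eq_zero_of_type_one
    (h1 : ∀ j, t j = 1 → ∃ a b : Fin n, a ≠ b ∧
      (v j = er b - er a ∨ v j = -(er b - er a)))
    {l : Fin m} (hl : t l = 1) (q : (Fin n → ℝ) ⧸ typeOneSpan v t) :
    ∑ b ∈ univ.filter (fun b => speciesClass v t b = q), v l b = 0 := by
  obtain ⟨a, b, -, hv⟩ := h1 l hl
  have hvl : v l ∈ typeOneSpan v t := subset_span ⟨l, hl, rfl⟩
  have hab : speciesClass v t b = speciesClass v t a := by
    rw [speciesClass_eq_iff]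
    rcases hv with h | h
    · exact h ▸ hvl
    · simpa [h] using neg_mem hvl
  rcases hv with h | h <;> simp [h, er, sum_sub_distrib, sum_pi_single', hab]

theorem exists_speciesClass_eq_of_type_zero (hmd : MinimallyDependent v) (hR : ∃ k, 2 ≤ t k)
    (h0 : ∀ j, t j = 0 → ∃ a : Fin n, v j = er a ∨ v j = -er a)
    (h1 : ∀ j, t j = 1 → ∃ a b : Fin n, a ≠ b ∧
      (v j = er b - er a ∨ v j = -(er b - er a)))
    {j : Fin m} {a : Fin n} (hj : t j = 0) (ha : v j = er a ∨ v j = -er a) :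
    ∃ k, 2 ≤ t k ∧ ∃ b, v k b ≠ 0 ∧ speciesClass v t b = speciesClass v t a := by
  classical
  by_contra! hnone
  obtain ⟨c, hc, hc0⟩ := hmd.exists_sum_smul_eq_zero_forall_ne_zero
  set s := univ.filter fun b => speciesClass v t b = speciesClass v t a
  have hrel : ∑ l, c l * ∑ b ∈ s, v l b = 0 := by
    have h := congrArg (fun x => ∑ b ∈ s, x b) hc
    simp only [Finset.sum_apply, Pi.smul_apply, smul_eq_mul, Pi.zero_apply, sum_const_zero] at h
    rw [sum_comm] at h
    simpa only [mul_sum] using h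
  have hothers : ∀ l ≠ j, ∑ b ∈ s, v l b = 0 := by
    intro l hlj
    rcases (by omega : t l = 0 ∨ t l = 1 ∨ 2 ≤ t l) with hl | hl | hl
    · obtain ⟨b, hb⟩ := h0 l hl
      have hba : speciesClass v t b ≠ speciesClass v t a :=
        fun h => hlj (eq_of_speciesClass_eq hmd hR hl hj hb ha h)
      rcases hb with h | h <;> simp [h, er, sum_pi_single', s, hba]
    · exact sum_speciesClass_eq_zero_of_type_one h1 hl _
    · exact sum_eq_zero fun b hb => by_contra fun h => hnone l hl b h (mem_filter.1 hb).2
  rw [sum_eq_single j (fun l _ hl => by rw [hothers l hl, mul_zero]) (by simp)] at hrel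
  have hself : ∑ b ∈ s, v j b ≠ 0 := by
    rcases ha with h | h <;> simp [h, er, sum_pi_single', s]
  exact hself ((mul_eq_zero.1 hrel).resolve_left (hc0 j))

theorem card_support_le_type
    (h2 : ∀ j, t j = 2 → ∃ a b : Fin n, a ≠ b ∧
      (v j = er a + er b ∨ v j = -(er a + er b)))
    (h3 : ∀ j, t j = 3 → ∃ a b c : Fin n, a ≠ b ∧ a ≠ c ∧ b ≠ c ∧
      (v j = er a + er b - er c ∨ v j = -(er a + er b - er c)))
    (h4 : ∀ j, t j = 4 → ∃ a b c d : Fin n,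
      a ≠ b ∧ a ≠ c ∧ a ≠ d ∧ b ≠ c ∧ b ≠ d ∧ c ≠ d ∧
      (v j = er a + er b - er c - er d ∨ v j = -(er a + er b - er c - er d)))
    {k : Fin m} (hk : 2 ≤ t k) : #{b | v k b ≠ 0} ≤ t k := by
  have hsupp : ∀ S : Finset (Fin n), (∀ b ∉ S, v k b = 0) → #{b | v k b ≠ 0} ≤ #S :=
    fun S hS => card_le_card fun b hb => by_contra fun h => (mem_filter.1 hb).2 (hS b h)
  rcases (by omega : t k = 2 ∨ t k = 3 ∨ t k = 4) with h | h | h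
  · obtain ⟨a, b, -, hv⟩ := h2 k h
    refine (hsupp {a, b} fun x hx => ?_).trans (card_le_two.trans (by simp [h]))
    simp only [mem_insert, mem_singleton, not_or] at hx
    rcases hv with hv | hv <;> simp [hv, er, hx]
  · obtain ⟨a, b, c, -, -, -, hv⟩ := h3 k h
    refine (hsupp {a, b, c} fun x hx => ?_).trans (card_le_three.trans (by simp [h]))
    simp only [mem_insert, mem_singleton, not_or] at hx
    rcases hv with hv | hv <;> simp [hv, er, hx]
  · obtain ⟨a, b, c, d, -, -, -, -, -, -, hv⟩ := h4 k h
    refine (hsupp {a, b, c, d} fun x hx => ?_).trans (card_le_four.trans (by simp [h]))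
    simp only [mem_insert, mem_singleton, not_or] at hx
    rcases hv with hv | hv <;> simp [hv, er, hx]

end BinaryNetwork

theorem minimallyDependent_count_bound_general {m n : ℕ}
    (v : Fin m → (Fin n → ℝ)) (t : Fin m → Fin 5)
    (h0 : ∀ j, t j = 0 → ∃ a : Fin n, v j = er a ∨ v j = -er a)
    (h1 : ∀ j, t j = 1 → ∃ a b : Fin n, a ≠ b ∧
      (v j = er b - er a ∨ v j = -(er b - er a)))
    (h2 : ∀ j, t j = 2 → ∃ a b : Fin n, a ≠ b ∧
      (v j = er a + er b ∨ v j = -(er a + er b)))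
    (h3 : ∀ j, t j = 3 → ∃ a b c : Fin n, a ≠ b ∧ a ≠ c ∧ b ≠ c ∧
      (v j = er a + er b - er c ∨ v j = -(er a + er b - er c)))
    (h4 : ∀ j, t j = 4 → ∃ a b c d : Fin n, a ≠ b ∧ a ≠ c ∧ a ≠ d ∧ b ≠ c ∧ b ≠ d ∧ c ≠ d ∧
      (v j = er a + er b - er c - er d ∨ v j = -(er a + er b - er c - er d)))
    (hmd : MinimallyDependent v)
    (i1 i3 i4 i5 : ℕ)
    (hi1 : i1 = (Finset.univ.filter fun j : Fin m => t j = 0).card)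
    (hi3 : i3 = (Finset.univ.filter fun j : Fin m => t j = 2).card)
    (hi4 : i4 = (Finset.univ.filter fun j : Fin m => t j = 3).card)
    (hi5 : i5 = (Finset.univ.filter fun j : Fin m => t j = 4).card)
    (hpos : 0 < i3 + i4 + i5) :
    i1 ≤ 2 * i3 + 3 * i4 + 4 * i5 := by
  classical
  have hweight := sum_val_filter_two_le_eq t
  rw [← hi3, ← hi4, ← hi5] at hweight
  obtain ⟨k₀, hk₀⟩ := nonempty_of_sum_ne_zero (by rw [hweight]; omega)
  have hR : ∃ k, 2 ≤ t k := ⟨k₀, (mem_filter.1 hk₀).2⟩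
  choose a ha using h0
  calc i1 = Fintype.card {j // t j = 0} := by rw [hi1, Fintype.card_subtype]
    _ ≤ ∑ k ∈ univ.filter (fun k => 2 ≤ t k),
          #((univ.filter fun b => v k b ≠ 0).image (speciesClass v t)) := by
        refine card_le_sum_card_of_injective (f := fun j => speciesClass v t (a j.1 j.2))
          (fun j l hjl => Subtype.ext <|
            eq_of_speciesClass_eq hmd hR j.2 l.2 (ha _ _) (ha _ _) hjl)
          fun j => ?_
        obtain ⟨k, hk, b, hb, hbj⟩ := exists_speciesClass_eq_of_type_zero hmd hR
          (fun l hl => ⟨a l hl, ha l hl⟩) h1 j.2 (ha j.1 j.2)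
        exact ⟨k, mem_filter.2 ⟨mem_univ _, hk⟩,
          mem_image.2 ⟨b, mem_filter.2 ⟨mem_univ _, hb⟩, hbj⟩⟩
    _ ≤ ∑ k ∈ univ.filter (fun k => 2 ≤ t k), (t k : ℕ) := sum_le_sum fun k hk =>
        card_image_le.trans (card_support_le_type h2 h3 h4 (mem_filter.1 hk).2)
    _ = 2 * i3 + 3 * i4 + 4 * i5 := hweight

/-- For a minimally dependent family of reaction vectors of a
binary network, consisting of `i₁` vectors `±e_a`, `i₂` vectors `±(e_b - e_a)`,
`i₃` vectors `±(e_a + e_b)` (two distinct species), `i₄` vectors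
`±(e_a + e_b - e_c)` (three distinct species) and `i₅` vectors
`±(e_a + e_b - e_c - e_d)` (four distinct species), with `i₃ + i₄ + i₅ > 0`,
we have `i₁ ≤ 2i₃ + 3i₄ + 4i₅`. -/
theorem minimallyDependent_count_bound {m n : ℕ}
    (v : Fin m → (Fin n → ℝ)) (t : Fin m → Fin 5)
    (h0 : ∀ j, t j = 0 → ∃ a : Fin n, v j = er a ∨ v j = -er a)
    (h1 : ∀ j, t j = 1 → ∃ a b : Fin n, a ≠ b ∧
      (v j = er b - er a ∨ v j = -(er b - er a)))
    (h2 : ∀ j, t j = 2 → ∃ a b : Fin n, a ≠ b ∧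
      (v j = er a + er b ∨ v j = -(er a + er b)))
    (h3 : ∀ j, t j = 3 → ∃ a b c : Fin n, a ≠ b ∧ a ≠ c ∧ b ≠ c ∧
      (v j = er a + er b - er c ∨ v j = -(er a + er b - er c)))
    (h4 : ∀ j, t j = 4 → ∃ a b c d : Fin n, a ≠ b ∧ a ≠ c ∧ a ≠ d ∧ b ≠ c ∧ b ≠ d ∧ c ≠ d ∧
      (v j = er a + er b - er c - er d ∨ v j = -(er a + er b - er c - er d)))
    (hmd : MinimallyDependent v)
    (i1 i2 i3 i4 i5 : ℕ)
    (hi1 : i1 = (Finset.univ.filter fun j : Fin m => t j = 0).card)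
    (hi2 : i2 = (Finset.univ.filter fun j : Fin m => t j = 1).card)
    (hi3 : i3 = (Finset.univ.filter fun j : Fin m => t j = 2).card)
    (hi4 : i4 = (Finset.univ.filter fun j : Fin m => t j = 3).card)
    (hi5 : i5 = (Finset.univ.filter fun j : Fin m => t j = 4).card)
    (hpos : 0 < i3 + i4 + i5) :
    i1 ≤ 2 * i3 + 3 * i4 + 4 * i5 :=
  minimallyDependent_count_bound_general v t h0 h1 h2 h3 h4 hmd i1 i3 i4 i5 hi1 hi3 hi4 hi5 hpos
end
end

section
/- For all real numbers x, y ≥ 0, (2x)^x · (2y)^y ≥ (x + y)^{x + y}, where real powers are used with the convention 0⁰ = 1. -/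
/-!
Taking logarithms, the inequality becomes `f (x + y) ≤ (f (2x) + f (2y)) / 2` for the convex
function `f t = t log t` on `[0, ∞)`, i.e. Jensen's inequality at the midpoint of `2x` and `2y`.
-/

open Real

namespace Real

/-- Since `c * t` vanishes only together with the exponent `t`, the convention `0 ^ 0 = 1`
agrees with `exp 0`. -/
lemma mul_rpow_self_eq_exp {c t : ℝ} (hc : 0 < c) (ht : 0 ≤ t) :
    (c * t) ^ t = exp (t * log (c * t)) := by
  rcases ht.eq_or_lt with rfl | ht
  · simp
  · rw [rpow_def_of_pos (by positivity), mul_comm]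

lemma add_mul_log_add_le {x y : ℝ} (hx : 0 ≤ x) (hy : 0 ≤ y) :
    (x + y) * log (x + y) ≤ x * log (2 * x) + y * log (2 * y) := by
  have jensen := convexOn_mul_log.2 (Set.mem_Ici.2 (by positivity : (0 : ℝ) ≤ 2 * x))
    (Set.mem_Ici.2 (by positivity : (0 : ℝ) ≤ 2 * y)) (by norm_num : (0 : ℝ) ≤ 1 / 2)
    (by norm_num : (0 : ℝ) ≤ 1 / 2) (by norm_num)
  have midpoint : (1 / 2 : ℝ) • (2 * x) + (1 / 2 : ℝ) • (2 * y) = x + y := by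
    simp only [smul_eq_mul]; ring
  rw [midpoint] at jensen
  simp only [smul_eq_mul] at jensen
  linarith

end Real

/-- For all reals `x, y ≥ 0`,
`(2x)^x (2y)^y ≥ (x + y)^(x + y)` (real powers, with `0⁰ = 1`). -/
theorem two_point_power_inequality (x y : ℝ) (hx : 0 ≤ x) (hy : 0 ≤ y) :
    (x + y) ^ (x + y) ≤ (2 * x) ^ x * (2 * y) ^ y := by
  calc (x + y) ^ (x + y) = exp ((x + y) * log (x + y)) := by
        simpa using mul_rpow_self_eq_exp one_pos (add_nonneg hx hy)
    _ ≤ exp (x * log (2 * x) + y * log (2 * y)) := exp_le_exp.2 (add_mul_log_add_le hx hy)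
    _ = (2 * x) ^ x * (2 * y) ^ y := by
        rw [exp_add, mul_rpow_self_eq_exp two_pos hx, mul_rpow_self_eq_exp two_pos hy]
end

section
/- Let n ≥ 1 and let x₁, …, x_n be nonnegative real numbers. Then ∏_{i=1}^{n} (n·xᵢ)^{xᵢ} ≥ (∑_{i=1}^{n} xᵢ)^{∑_{i=1}^{n} xᵢ}, where real powers are used with the convention 0⁰ = 1. -/
open Finset

/-- For `n ≥ 1` and nonnegative reals `x₁, …, x_n`,
`∏ᵢ (n xᵢ)^(xᵢ) ≥ (∑ᵢ xᵢ)^(∑ᵢ xᵢ)` (real powers, with `0⁰ = 1`). -/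
theorem n_point_power_inequality (n : ℕ) (hn : 1 ≤ n) (x : Fin n → ℝ)
    (hx : ∀ i, 0 ≤ x i) :
    (∑ i, x i) ^ (∑ i, x i) ≤ ∏ i, ((n : ℝ) * x i) ^ (x i) := by
  have hn0 : (0:ℝ) < n := by exact_mod_cast hn
  set S := ∑ i, x i with hS
  have hS0 : 0 ≤ S := Finset.sum_nonneg fun i _ => hx i
  rcases hS0.eq_or_lt with h0 | hpos
  · have hall : ∀ i ∈ (univ : Finset (Fin n)), x i = 0 :=
      (Finset.sum_eq_zero_iff_of_nonneg fun i _ => hx i).mp h0.symm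
    have : ∀ i ∈ (univ : Finset (Fin n)), ((n:ℝ) * x i) ^ (x i) = 1 := by
      intro i hi; rw [hall i hi, Real.rpow_zero]
    rw [Finset.prod_congr rfl this, Finset.prod_const_one, ← h0, Real.rpow_zero]
  · have key : S * Real.log S ≤ ∑ i, x i * Real.log ((n:ℝ) * x i) := by
      have hconv := Real.convexOn_mul_log
      have hj := hconv.map_sum_le (t := univ) (w := fun _ : Fin n => (1:ℝ)/n)
        (p := fun i => (n:ℝ) * x i)
        (fun i _ => by positivity)
        (by rw [Finset.sum_const, Finset.card_univ, Fintype.card_fin, nsmul_eq_mul]; field_simp)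
        (fun i _ => Set.mem_Ici.mpr (mul_nonneg hn0.le (hx i)))
      simp only [smul_eq_mul] at hj
      have hsum : ∑ i, (1:ℝ)/n * ((n:ℝ) * x i) = S := by
        rw [← Finset.mul_sum, ← Finset.mul_sum, hS]
        field_simp
      rw [hsum] at hj
      calc S * Real.log S ≤ ∑ i, (1:ℝ)/n * (((n:ℝ) * x i) * Real.log ((n:ℝ) * x i)) := hj
        _ = ∑ i, x i * Real.log ((n:ℝ) * x i) := by
            apply Finset.sum_congr rfl; intro i _; field_simp
    calc S ^ S = Real.exp (Real.log S * S) := Real.rpow_def_of_pos hpos S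
      _ ≤ Real.exp (∑ i, x i * Real.log ((n:ℝ) * x i)) := by
          apply Real.exp_le_exp.mpr; rw [mul_comm]; exact key
      _ = ∏ i, Real.exp (x i * Real.log ((n:ℝ) * x i)) := Real.exp_sum _ _
      _ = ∏ i, ((n:ℝ) * x i) ^ (x i) := by
          apply Finset.prod_congr rfl; intro i _
          rcases (hx i).eq_or_lt with h | h
          · rw [← h, Real.rpow_zero, zero_mul, Real.exp_zero]
          · rw [Real.rpow_def_of_pos (by positivity), mul_comm]
end
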